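/- Let 𝒳 be a full subcategory of an abelian category 𝒜 and define F_𝒳(C,A) to be the set of classes of short exact sequences 0 → A → B → C → 0 such that Hom(X,B) → Hom(X,C) is surjective for every X in 𝒳. Then the composition of two F_𝒳-epimorphisms is an F_𝒳-epimorphism. -/

import Mathlib

open CategoryTheory CategoryTheory.Limits CategoryTheory.Category

universe w v u v' u'

namespace RelDer

variable {𝒜 : Type u} [Category.{v} 𝒜] [Abelian 𝒜]

/-- `g` is an `F`-epimorphism: it fits into an `F`-exact short exact sequence. -/
def FEpi (F : ShortComplex 𝒜 → Prop) {B C : 𝒜} (g : B ⟶ C) : Prop :=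
  ∃ (K : 𝒜) (k : K ⟶ B) (w : k ≫ g = 0), F (ShortComplex.mk k g w)

/-- `f` is an `F`-monomorphism. -/
def FMono (F : ShortComplex 𝒜 → Prop) {A B : 𝒜} (f : A ⟶ B) : Prop :=
  ∃ (C : 𝒜) (g : B ⟶ C) (w : f ≫ g = 0), F (ShortComplex.mk f g w)

/-- `P` is `F`-projective: `Hom(P,-)` sends `F`-exact sequences to exact sequences. -/
def FProjective (F : ShortComplex 𝒜 → Prop) (P : 𝒜) : Prop :=
  ∀ (S : ShortComplex 𝒜), F S → ∀ (p : P ⟶ S.X₃), ∃ q : P ⟶ S.X₂, q ≫ S.g = p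

/-- `I` is `F`-injective. -/
def FInjective (F : ShortComplex 𝒜 → Prop) (I : 𝒜) : Prop :=
  ∀ (S : ShortComplex 𝒜), F S → ∀ (p : S.X₁ ⟶ I), ∃ q : S.X₂ ⟶ I, S.f ≫ q = p

/-- `F` has enough projectives. -/
def HasEnoughFProjectives (F : ShortComplex 𝒜 → Prop) : Prop :=
  ∀ M : 𝒜, ∃ (P : 𝒜) (g : P ⟶ M), FProjective F P ∧ FEpi F g

/-- `F` has enough injectives. -/
def HasEnoughFInjectives (F : ShortComplex 𝒜 → Prop) : Prop :=
  ∀ M : 𝒜, ∃ (I : 𝒜) (f : M ⟶ I), FInjective F I ∧ FMono F f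

lemma image_ι_comp_d (X : CochainComplex 𝒜 ℤ) (i : ℤ) :
    image.ι (X.d (i-1) i) ≫ X.d i (i+1) = 0 := by
  rw [← cancel_epi (factorThruImage (X.d (i-1) i)), image.fac_assoc,
    HomologicalComplex.d_comp_d, comp_zero]

/-- The short complex `Im d^{i-1} → X^i → Im d^i` associated to a cochain complex. -/
noncomputable def imagesShortComplex (X : CochainComplex 𝒜 ℤ) (i : ℤ) : ShortComplex 𝒜 :=
  ShortComplex.mk (image.ι (X.d (i-1) i)) (factorThruImage (X.d i (i+1)))
    (by rw [← cancel_mono (image.ι (X.d i (i+1))), assoc, image.fac, zero_comp,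
      image_ι_comp_d])

/-- A complex is `F`-acyclic if each `0 → Im d^{i-1} → X^i → Im d^i → 0` is `F`-exact. -/
def FAcyclic (F : ShortComplex 𝒜 → Prop) (X : CochainComplex 𝒜 ℤ) : Prop :=
  ∀ i : ℤ, F (imagesShortComplex X i)

/-- A chain map is an `F`-quasi-isomorphism if its mapping cone is `F`-acyclic. -/
def FQuasiIso (F : ShortComplex 𝒜 → Prop) {X Y : CochainComplex 𝒜 ℤ} (f : X ⟶ Y) : Prop :=
  FAcyclic F (CochainComplex.mappingCone f)

def BoundedAbove (X : CochainComplex 𝒜 ℤ) : Prop :=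
  ∃ n : ℤ, ∀ i, n < i → IsZero (X.X i)

def Bounded (X : CochainComplex 𝒜 ℤ) : Prop :=
  ∃ a b : ℤ, ∀ i, (i < a ∨ b < i) → IsZero (X.X i)

/-- An equivalence of (pre)triangulated categories. -/
structure TriangleEquivalence (C : Type u) (D : Type u') [Category.{v} C] [Category.{v'} D]
    [HasShift C ℤ] [HasShift D ℤ] [Preadditive C] [Preadditive D]
    [HasZeroObject C] [HasZeroObject D]
    [∀ n : ℤ, (shiftFunctor C n).Additive] [∀ n : ℤ, (shiftFunctor D n).Additive]
    [Pretriangulated C] [Pretriangulated D] where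
  e : C ≌ D
  commShift : e.functor.CommShift ℤ
  isTriangulated : letI := commShift; e.functor.IsTriangulated

/-- Two maps are stably equal if their difference factors through an object satisfying `P`. -/
def stableHomRel (P : 𝒜 → Prop) : HomRel 𝒜 := fun {X Y} f g =>
  ∃ (Z : 𝒜) (_ : P Z) (a : X ⟶ Z) (b : Z ⟶ Y), f - g = a ≫ b

/-- The stable category of `𝒜` modulo objects satisfying `P`. -/
abbrev StableCategory (P : 𝒜 → Prop) := CategoryTheory.Quotient (stableHomRel P)

/-- The complex `Hom(P^•, Y)` of abelian groups, whose homology computes relative Ext. -/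
noncomputable def homComplex (P : CochainComplex 𝒜 ℤ) (Y : 𝒜) :
    HomologicalComplex AddCommGrpCat (ComplexShape.up ℤ).symm :=
  ((preadditiveYoneda.obj Y).mapHomologicalComplex (ComplexShape.up ℤ).symm).obj P.op

/-- The relative Ext group `Ext^i_F(X,Y)` computed from an `F`-projective resolution `P` of
`X` as the `i`-th cohomology of `Hom(P^•,Y)`. -/
noncomputable def extFGroup (P : CochainComplex 𝒜 ℤ) (Y : 𝒜) (i : ℤ) : AddCommGrpCat :=
  (homComplex P Y).homology (-i)

/-- `P`, together with the augmentation `ε`, is an `F`-projective resolution of `X`. -/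
def IsFProjResolution (F : ShortComplex 𝒜 → Prop) (X : 𝒜) (P : CochainComplex 𝒜 ℤ)
    (ε : P ⟶ (CochainComplex.singleFunctor 𝒜 0).obj X) : Prop :=
  (∀ i : ℤ, 0 < i → IsZero (P.X i)) ∧ (∀ i : ℤ, FProjective F (P.X i)) ∧ FQuasiIso F ε

/-- `X` has `F`-projective dimension at most `m`. -/
def FProjDimLe (F : ShortComplex 𝒜 → Prop) (X : 𝒜) (m : ℕ) : Prop :=
  ∃ (P : CochainComplex 𝒜 ℤ) (ε : P ⟶ (CochainComplex.singleFunctor 𝒜 0).obj X),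
    IsFProjResolution F X P ε ∧ ∀ i : ℤ, i < -(m : ℤ) → IsZero (P.X i)

/-- `I`, together with the augmentation `ε`, is an `F`-injective coresolution of `X`. -/
def IsFInjCoresolution (F : ShortComplex 𝒜 → Prop) (X : 𝒜) (I : CochainComplex 𝒜 ℤ)
    (ε : (CochainComplex.singleFunctor 𝒜 0).obj X ⟶ I) : Prop :=
  (∀ i : ℤ, i < 0 → IsZero (I.X i)) ∧ (∀ i : ℤ, FInjective F (I.X i)) ∧ FQuasiIso F ε

/-- `X` has `F`-injective dimension at most `m`. -/
def FInjDimLe (F : ShortComplex 𝒜 → Prop) (X : 𝒜) (m : ℕ) : Prop :=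
  ∃ (I : CochainComplex 𝒜 ℤ) (ε : (CochainComplex.singleFunctor 𝒜 0).obj X ⟶ I),
    IsFInjCoresolution F X I ε ∧ ∀ i : ℤ, (m : ℤ) < i → IsZero (I.X i)

/-- The `F`-projective dimension of `X`, valued in `ℕ∞`. -/
noncomputable def FProjDim (F : ShortComplex 𝒜 → Prop) (X : 𝒜) : ℕ∞ :=
  sInf {n : ℕ∞ | ∃ m : ℕ, n = m ∧ FProjDimLe F X m}

/-- The `F`-injective dimension of `X`, valued in `ℕ∞`. -/
noncomputable def FInjDim (F : ShortComplex 𝒜 → Prop) (X : 𝒜) : ℕ∞ :=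
  sInf {n : ℕ∞ | ∃ m : ℕ, n = m ∧ FInjDimLe F X m}

/-- The `F`-global dimension. -/
noncomputable def FGlobalDim (F : ShortComplex 𝒜 → Prop) : ℕ∞ :=
  ⨆ X : 𝒜, FProjDim F X

/-- The `F`-finitistic dimension. -/
noncomputable def FFinitisticDim (F : ShortComplex 𝒜 → Prop) : ℕ∞ :=
  ⨆ X : {X : 𝒜 // FProjDim F X ≠ ⊤}, FProjDim F X.1

/-- The class of all short exact sequences: the absolute (non-relative) exact structure. -/
def allExact : ShortComplex 𝒜 → Prop := fun S => S.ShortExact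

/-- `M` belongs to `add G`. -/
def InAdd (G M : 𝒜) : Prop :=
  haveI : HasFiniteBiproducts 𝒜 := Abelian.hasFiniteBiproducts
  ∃ (n : ℕ) (N : 𝒜), Nonempty ((M ⊞ N) ≅ (⨁ fun _ : Fin n => G))

/-- The (Dec 2024) Mathlib structure `Triangulated.Subcategory`, removed since. -/
structure Triangulated.Subcategory (C : Type u') [Category.{v'} C] [HasZeroObject C]
    [HasShift C ℤ] [Preadditive C] [∀ n : ℤ, (shiftFunctor C n).Additive]
    [Pretriangulated C] where
  P : C → Prop
  zero' : ∃ (Z : C) (_ : IsZero Z), P Z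
  shift (X : C) (n : ℤ) : P X → P (X⟦n⟧)
  ext₂' (T : Pretriangulated.Triangle C) (_ : T ∈ Pretriangulated.distinguishedTriangles) :
    P T.obj₁ → P T.obj₃ → ∃ (Y : C) (_ : P Y), Nonempty (T.obj₂ ≅ Y)

/-- `T` generates the objects satisfying `Gen` as a triangulated category
(closed under isomorphisms and retracts/direct summands). -/
def Generates {𝒯 : Type u'} [Category.{v'} 𝒯] [HasZeroObject 𝒯] [HasShift 𝒯 ℤ]
    [Preadditive 𝒯] [∀ n : ℤ, (shiftFunctor 𝒯 n).Additive] [Pretriangulated 𝒯]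
    (T : 𝒯) (Gen : 𝒯 → Prop) : Prop :=
  ∀ (S : Triangulated.Subcategory 𝒯),
    (∀ X Y : 𝒯, (X ≅ Y) → S.P X → S.P Y) →
    (∀ X Y : 𝒯, (∃ (r : X ⟶ Y) (s : Y ⟶ X), s ≫ r = 𝟙 Y) → S.P X → S.P Y) →
    S.P T → ∀ X : 𝒯, Gen X → S.P X

universe u₁ v₁ u₂ v₂ u₃ v₃

/-- `g` is an `F_𝒳`-epimorphism: an epimorphism such that `Hom(X, g)` is surjective
for all `X` in `𝒳`. -/
def FXEpi {𝒜 : Type u} [Category.{v} 𝒜] [Abelian 𝒜] (𝒳 : 𝒜 → Prop) {B C : 𝒜}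
    (g : B ⟶ C) : Prop :=
  Epi g ∧ ∀ X : 𝒜, 𝒳 X → ∀ x : X ⟶ C, ∃ y : X ⟶ B, y ≫ g = x

/-- The composition of two `F_𝒳`-epimorphisms is an `F_𝒳`-epimorphism. -/
theorem statement1 {𝒜 : Type u} [Category.{v} 𝒜] [Abelian 𝒜] (𝒳 : 𝒜 → Prop)
    {A B C : 𝒜} (g : A ⟶ B) (h : B ⟶ C) (hg : FXEpi 𝒳 g) (hh : FXEpi 𝒳 h) :
    FXEpi 𝒳 (g ≫ h) := by
  obtain ⟨_, liftG⟩ := hg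
  obtain ⟨_, liftH⟩ := hh
  refine ⟨epi_comp g h, fun X hX x => ?_⟩
  obtain ⟨y, rfl⟩ := liftH X hX x
  obtain ⟨z, rfl⟩ := liftG X hX y
  exact ⟨z, (assoc z g h).symm⟩

end RelDer
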